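/- Let q = c/d be a positive rational in lowest terms. The map ψ, which sends 1^k to 1^{k+c+d} and sends v·1^ℓ (where v ends in 0) to v·0^d·1^c·1^ℓ, is a bijection from W_{q,n} onto the set of words in W_{q,n+c+d} ending in at least c ones. -/

import Mathlib

/-- `isValid c d w` says every maximal factor of `w` of the form `0^a 1^b`
with `a > 0` satisfies `a * (c/d) > b`, i.e. `c*a > d*b`.
Here `false` plays the role of `0` and `true` of `1`; maximality is expressed
by requiring the prefix to end with `1` (or be empty) and the suffix to start
with `0` (or be empty). -/
def isValid (c d : ℕ) (w : List Bool) : Prop :=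
  ∀ p s : List Bool, ∀ a b : ℕ,
    w = p ++ List.replicate a false ++ List.replicate b true ++ s →
    (p = [] ∨ p.getLast? = some true) →
    (s = [] ∨ s.head? = some false) →
    0 < a → d * b < c * a

/-- number of words of length `n` in `W_{c/d,n}` -/
noncomputable def wcount (c d n : ℕ) : ℕ :=
  Nat.card {w : List Bool // w.length = n ∧ isValid c d w}

/-- Insert the spawning infix `0^d 1^c` just after the rightmost 0; if there is
no 0, append `c + d` ones. -/
def psi (c d : ℕ) (w : List Bool) : List Bool :=
  if w.all (fun b => b) then w ++ List.replicate (c + d) true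
  else
    let l := (w.reverse.takeWhile (fun b => b)).length
    w.take (w.length - l) ++ List.replicate d false ++ List.replicate (c + l) true

/-!
Every word is either `1^k` or `x 0^A 1^B` with `A > 0` and `x` empty or ending in `1`, and this
decomposition is unique. For such a word, validity amounts to validity of `x` together with
`d B < c A`, and `ψ` maps it to `x 0^(A+d) 1^(c+B)`; since `d (c + B) < c (A + d) ↔ d B < c A`,
`ψ` preserves validity, and uniqueness of the decomposition makes `ψ` injective. Conversely a valid
word `x 0^A 1^B` ending in `1^c` has `B ≥ c`, hence `d c ≤ d B < c A` forces `A > d`, and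
`x 0^(A-d) 1^(B-c)` is its valid preimage.
-/

open List

lemma replicate_append_inj {α : Type*} {v : α} {m n : ℕ} {l l' : List α}
    (hl : l.head? ≠ some v) (hl' : l'.head? ≠ some v)
    (h : replicate m v ++ l = replicate n v ++ l') : m = n ∧ l = l' := by
  induction m generalizing n with
  | zero =>
    cases n with
    | zero => exact ⟨rfl, h⟩
    | succ n =>
      simp only [replicate_zero, nil_append, replicate_succ, cons_append] at h
      simp [h] at hl
  | succ m ih =>
    cases n with
    | zero =>
      simp only [replicate_zero, nil_append, replicate_succ, cons_append] at h
      simp [← h] at hl'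
    | succ n => simpa using ih (by simpa [replicate_succ] using h)

lemma block_inj {x y : List Bool} {A B a b : ℕ}
    (hx : x = [] ∨ x.getLast? = some true) (hy : y = [] ∨ y.getLast? = some true)
    (hA : 0 < A) (ha : 0 < a)
    (h : x ++ replicate A false ++ replicate B true = y ++ replicate a false ++ replicate b true) :
    x = y ∧ A = a ∧ B = b := by
  have hrev := congrArg reverse h
  simp only [reverse_append, reverse_replicate, append_assoc] at hrev
  obtain ⟨hB, hrev⟩ := replicate_append_inj (by simp [head?_append, head?_replicate, hA.ne'])
    (by simp [head?_append, head?_replicate, ha.ne']) hrev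
  obtain ⟨hA, hrev⟩ := replicate_append_inj (by rcases hx with rfl | hx <;> simp [*])
    (by rcases hy with rfl | hy <;> simp [*]) hrev
  exact ⟨reverse_inj.1 hrev, hA, hB⟩

lemma eq_replicate_or_block (w : List Bool) :
    (∃ k, w = replicate k true) ∨
      ∃ x A B, (x = [] ∨ x.getLast? = some true) ∧ 0 < A ∧
        w = x ++ replicate A false ++ replicate B true := by
  induction w using reverseRecOn with
  | nil => exact Or.inl ⟨0, rfl⟩
  | append_singleton w v ih =>
    rcases ih with ⟨k, rfl⟩ | ⟨x, A, B, hx, hA, rfl⟩ <;> cases v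
    · refine Or.inr ⟨replicate k true, 1, 0, ?_, Nat.one_pos, by simp⟩
      cases k <;> simp [getLast?_replicate]
    · exact Or.inl ⟨k + 1, by rw [replicate_succ']⟩
    · rcases Nat.eq_zero_or_pos B with rfl | hB
      · exact Or.inr ⟨x, A + 1, 0, hx, by omega, by simp [replicate_succ']⟩
      · refine Or.inr ⟨x ++ replicate A false ++ replicate B true, 1, 0, ?_, Nat.one_pos, by simp⟩
        simp [getLast?_append, getLast?_replicate, hB.ne']
    · exact Or.inr ⟨x, A, B + 1, hx, hA, by simp [replicate_succ']⟩

lemma replicate_true_ne_block {x y : List Bool} {k A : ℕ} (hA : 0 < A) :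
    replicate k true ≠ x ++ replicate A false ++ y := by
  intro h
  have : false ∈ replicate k true := h ▸ by simp [hA.ne']
  simp at this

lemma psi_replicate_true (c d k : ℕ) :
    psi c d (replicate k true) = replicate (k + c + d) true := by
  simp [psi, all_replicate, add_assoc]

lemma psi_block (c d : ℕ) {x : List Bool} {A B : ℕ} (hA : 0 < A) :
    psi c d (x ++ replicate A false ++ replicate B true) =
      x ++ replicate (A + d) false ++ replicate (c + B) true := by
  have htrail : ((x ++ replicate A false ++ replicate B true).reverse.takeWhile
      (fun b => b)).length = B := by
    obtain ⟨A, rfl⟩ : ∃ k, A = k + 1 := ⟨A - 1, by omega⟩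
    simp only [reverse_append, reverse_replicate, append_assoc]
    rw [takeWhile_append_of_pos (by simp), replicate_succ]
    simp
  have hnot : ¬ (x ++ replicate A false ++ replicate B true).all (fun b => b) := by
    simp [hA.ne']
  have hlen : (x ++ replicate A false ++ replicate B true).length - B =
      (x ++ replicate A false).length := by
    simp only [length_append, length_replicate]; omega
  rw [psi, if_neg hnot]
  dsimp only
  rw [htrail, hlen, take_left, replicate_add]
  simp

lemma isValid_replicate_true (c d k : ℕ) : isValid c d (replicate k true) := by
  intro p s a b h _ _ ha
  exact (replicate_true_ne_block ha (by simpa [append_assoc] using h)).elim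

/-- `0^A 1^B` is sorted, so the factor `1 0` at the junction of `u` and `v` lies inside `x`. -/
lemma exists_eq_append_of_append_eq_block {u v x : List Bool} {A B : ℕ}
    (hu : u.getLast? = some true) (hv : v.head? = some false)
    (h : u ++ v = x ++ replicate A false ++ replicate B true) :
    ∃ t, x = u ++ t ∧ v = t ++ replicate A false ++ replicate B true := by
  rw [append_assoc, append_eq_append_iff] at h
  rcases h with ⟨t, hx, hv'⟩ | ⟨t, rfl, hblock⟩
  · exact ⟨t, hx, by rw [hv', append_assoc]⟩
  · rcases eq_nil_or_concat t with rfl | ⟨t', e, rfl⟩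
    · exact ⟨[], by simp, by simpa using hblock.symm⟩
    · have hsorted : (replicate A false ++ replicate B true).Pairwise (· ≤ ·) := by
        simp [pairwise_append, pairwise_replicate]
      rw [hblock, pairwise_append] at hsorted
      have he : e = true := by simpa [← append_assoc] using hu
      have hle := hsorted.2.2 e (by simp) false (mem_of_head? hv)
      exact absurd hle (by simp [he])

lemma isValid_block_iff {c d : ℕ} {x : List Bool} {A B : ℕ}
    (hx : x = [] ∨ x.getLast? = some true) (hA : 0 < A) :
    isValid c d (x ++ replicate A false ++ replicate B true) ↔ isValid c d x ∧ d * B < c * A := by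
  constructor
  · intro hv
    refine ⟨fun p s a b heq hp hs ha => hv p (s ++ replicate A false ++ replicate B true) a b
      (by simp [heq]) hp (Or.inr ?_) ha, hv x [] A B (by simp) hx (Or.inl rfl) hA⟩
    rcases hs with rfl | hs <;> simp [head?_append, head?_replicate, hA.ne', *]
  · rintro ⟨hxv, hab⟩ p s a b heq hp hs ha
    rcases hs with rfl | hs
    · obtain ⟨rfl, rfl, rfl⟩ := block_inj hx hp hA ha (by simpa using heq)
      exact hab
    rcases Nat.eq_zero_or_pos b with rfl | hb
    -- `isValid` also quantifies over non-maximal runs `0^a` (with `b = 0`); these need `0 < c`.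
    · simpa using Nat.mul_pos (Nat.pos_of_mul_pos_right (Nat.zero_lt_of_lt hab)) ha
    obtain ⟨t, rfl, rfl⟩ := exists_eq_append_of_append_eq_block
      (u := p ++ replicate a false ++ replicate b true)
      (by simp [getLast?_append, getLast?_replicate, hb.ne']) hs heq.symm
    refine hxv p t a b rfl hp ?_ ha
    rcases t with _ | ⟨e, t⟩
    · exact Or.inl rfl
    · exact Or.inr (by simpa using hs)

lemma le_of_replicate_true_suffix_block {x : List Bool} {c A B : ℕ} (hA : 0 < A)
    (h : replicate c true <:+ x ++ replicate A false ++ replicate B true) : c ≤ B := by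
  by_contra! hBc
  obtain ⟨u, hu⟩ := h
  rw [show c = (c - B) + B by omega, replicate_add, ← append_assoc] at hu
  have := congrArg getLast? (append_cancel_right hu)
  simp [getLast?_append, getLast?_replicate, hA.ne', show c - B ≠ 0 by omega] at this

theorem psi_injective (c d : ℕ) : Function.Injective (psi c d) := by
  intro w₁ w₂ h
  rcases eq_replicate_or_block w₁ with ⟨k, rfl⟩ | ⟨x, A, B, hx, hA, rfl⟩ <;>
    rcases eq_replicate_or_block w₂ with ⟨k', rfl⟩ | ⟨y, A', B', hy, hA', rfl⟩
  · rw [psi_replicate_true, psi_replicate_true, replicate_inj] at h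
    rw [show k = k' by omega]
  · rw [psi_replicate_true, psi_block c d hA'] at h
    exact absurd h (replicate_true_ne_block (by omega))
  · rw [psi_replicate_true, psi_block c d hA] at h
    exact absurd h.symm (replicate_true_ne_block (by omega))
  · rw [psi_block c d hA, psi_block c d hA'] at h
    obtain ⟨rfl, hA, hB⟩ := block_inj hx hy (by omega) (by omega) h
    rw [show A = A' by omega, show B = B' by omega]

theorem psi_mapsTo (c d n : ℕ) :
    Set.MapsTo (psi c d)
      {w : List Bool | w.length = n ∧ isValid c d w}
      {w : List Bool | w.length = n + c + d ∧ isValid c d w ∧ replicate c true <:+ w} := by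
  rintro w ⟨rfl, hw⟩
  rcases eq_replicate_or_block w with ⟨k, rfl⟩ | ⟨x, A, B, hx, hA, rfl⟩
  · rw [psi_replicate_true]
    refine ⟨by simp, isValid_replicate_true c d _, ?_⟩
    rw [show k + c + d = (k + d) + c by omega, replicate_add]
    exact suffix_append _ _
  · obtain ⟨hxv, hab⟩ := (isValid_block_iff hx hA).1 hw
    rw [psi_block c d hA]
    refine ⟨by simp only [length_append, length_replicate]; omega, (isValid_block_iff hx (by omega)).2 ⟨hxv, ?_⟩, ?_⟩
    · rw [Nat.mul_add, Nat.mul_add, Nat.mul_comm d c]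
      omega
    · rw [add_comm c B, replicate_add B c, ← append_assoc]
      exact suffix_append _ _

theorem psi_surjOn (c d n : ℕ) :
    Set.SurjOn (psi c d)
      {w : List Bool | w.length = n ∧ isValid c d w}
      {w : List Bool | w.length = n + c + d ∧ isValid c d w ∧ replicate c true <:+ w} := by
  rintro w ⟨hlen, hw, hsuf⟩
  rcases eq_replicate_or_block w with ⟨k, rfl⟩ | ⟨x, A, B, hx, hA, rfl⟩
  · refine ⟨replicate n true, ⟨by simp, isValid_replicate_true c d n⟩, ?_⟩
    simp only [length_replicate] at hlen
    rw [psi_replicate_true, hlen]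
  · obtain ⟨hxv, hab⟩ := (isValid_block_iff hx hA).1 hw
    have hcB : c ≤ B := le_of_replicate_true_suffix_block hA hsuf
    have hdc : d * c ≤ d * B := Nat.mul_le_mul_left d hcB
    have hdA : d < A := Nat.lt_of_mul_lt_mul_left (a := c) (by rw [Nat.mul_comm c d]; omega)
    refine ⟨x ++ replicate (A - d) false ++ replicate (B - c) true, ⟨?_, ?_⟩, ?_⟩
    · simp only [length_append, length_replicate] at hlen ⊢; omega
    · refine (isValid_block_iff hx (by omega)).2 ⟨hxv, ?_⟩
      rw [Nat.mul_sub, Nat.mul_sub, Nat.mul_comm c d]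
      omega
    · rw [psi_block c d (by omega), Nat.sub_add_cancel hdA.le, Nat.add_sub_cancel' hcB]

theorem stmt6_general (c d : ℕ) (n : ℕ) :
    Set.BijOn (psi c d)
      {w : List Bool | w.length = n ∧ isValid c d w}
      {w : List Bool | w.length = n + c + d ∧ isValid c d w ∧
        List.replicate c true <:+ w} :=
  ⟨psi_mapsTo c d n, (psi_injective c d).injOn, psi_surjOn c d n⟩

theorem stmt6 (c d : ℕ) (hc : 0 < c) (hd : 0 < d) (hcd : Nat.Coprime c d) (n : ℕ) :
    Set.BijOn (psi c d)
      {w : List Bool | w.length = n ∧ isValid c d w}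
      {w : List Bool | w.length = n + c + d ∧ isValid c d w ∧
        List.replicate c true <:+ w} :=
  stmt6_general c d n
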